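/- For density matrices A, B (positive semidefinite with trace 1) one has H(A,B) ≤ √2·B(A,B), i.e., ‖A^{1/2} − B^{1/2}‖_F² ≤ 2·(Tr A + Tr B − 2Tr((A^{1/2} B A^{1/2})^{1/2})). -/

import Mathlib

open Matrix
open scoped Classical

/-- The positive semidefinite square root of a matrix (and `0` if the matrix is not
positive semidefinite). -/
noncomputable def msqrt {d : ℕ} (A : Matrix (Fin d) (Fin d) ℝ) : Matrix (Fin d) (Fin d) ℝ :=
  if h : A.PosSemidef then
    (h.1.eigenvectorUnitary : Matrix (Fin d) (Fin d) ℝ) *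
      diagonal (fun i => Real.sqrt (h.1.eigenvalues i)) *
      (star h.1.eigenvectorUnitary : Matrix (Fin d) (Fin d) ℝ)
  else 0

/-- The squared Bures metric `B(A,B)² = Tr(A) + Tr(B) − 2·Tr((A^{1/2} B A^{1/2})^{1/2})`. -/
noncomputable def buresSq {d : ℕ} (A B : Matrix (Fin d) (Fin d) ℝ) : ℝ :=
  A.trace + B.trace - 2 * (msqrt (msqrt A * B * msqrt A)).trace

/-- Squared Frobenius (Hilbert–Schmidt) norm `‖M‖_F² = Tr(MᵀM)`. -/
noncomputable def frobSq {d : ℕ} (M : Matrix (Fin d) (Fin d) ℝ) : ℝ := (Mᵀ * M).trace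

namespace Matrix.PosSemidef

/-- The positive semidefinite square root, as in `msqrt`. -/
noncomputable def sqrt {d : ℕ} {A : Matrix (Fin d) (Fin d) ℝ} (h : A.PosSemidef) :
    Matrix (Fin d) (Fin d) ℝ :=
  (h.1.eigenvectorUnitary : Matrix (Fin d) (Fin d) ℝ) *
      diagonal (fun i => Real.sqrt (h.1.eigenvalues i)) *
      (star h.1.eigenvectorUnitary : Matrix (Fin d) (Fin d) ℝ)

lemma posSemidef_sqrt {d : ℕ} {A : Matrix (Fin d) (Fin d) ℝ} (h : A.PosSemidef) :
    h.sqrt.PosSemidef := by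
  unfold sqrt
  rw [Unitary.isUnit_coe.posSemidef_star_right_conjugate_iff, posSemidef_diagonal_iff]
  intro i; exact Real.sqrt_nonneg _

lemma sqrt_mul_self {d : ℕ} {A : Matrix (Fin d) (Fin d) ℝ} (h : A.PosSemidef) :
    h.sqrt * h.sqrt = A := by
  unfold sqrt
  conv_rhs => rw [h.1.spectral_theorem, Unitary.conjStarAlgAut_apply]
  simp only [Matrix.mul_assoc]
  rw [← Matrix.mul_assoc (star (h.1.eigenvectorUnitary : Matrix (Fin d) (Fin d) ℝ)),
    Unitary.coe_star_mul_self, Matrix.one_mul, ← Matrix.mul_assoc (diagonal _),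
    diagonal_mul_diagonal]
  congr 3
  funext i
  simp [Real.mul_self_sqrt (h.eigenvalues_nonneg i)]

end Matrix.PosSemidef

namespace HellingerAux

variable {d : ℕ}

lemma trace_transpose_mul_eq (X Y : Matrix (Fin d) (Fin d) ℝ) :
    (Xᵀ * Y).trace = ∑ k, ∑ l, X k l * Y k l := by
  simp only [Matrix.trace, Matrix.diag, Matrix.mul_apply, Matrix.transpose_apply]
  rw [Finset.sum_comm]

lemma trace_transpose_mul_self_nonneg (X : Matrix (Fin d) (Fin d) ℝ) :
    0 ≤ (Xᵀ * X).trace := by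
  rw [trace_transpose_mul_eq]
  apply Finset.sum_nonneg; intro k _; apply Finset.sum_nonneg; intro l _
  exact mul_self_nonneg _

/-- Cauchy–Schwarz for the Frobenius inner product. -/
lemma trace_CS (X Y : Matrix (Fin d) (Fin d) ℝ) :
    (X * Y).trace ≤ Real.sqrt ((Xᵀ * X).trace) * Real.sqrt ((Yᵀ * Y).trace) := by
  have hsq : ((X * Y).trace) ^ 2 ≤ ((Xᵀ * X).trace) * ((Yᵀ * Y).trace) := by
    have h := Finset.sum_mul_sq_le_sq_mul_sq Finset.univ
      (fun p : Fin d × Fin d => X p.1 p.2) (fun p : Fin d × Fin d => Y p.2 p.1)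
    have h1 : (X * Y).trace = ∑ p : Fin d × Fin d, X p.1 p.2 * Y p.2 p.1 := by
      rw [← Finset.univ_product_univ, Finset.sum_product]
      simp [Matrix.trace, Matrix.diag, Matrix.mul_apply]
    have h2 : (Xᵀ * X).trace = ∑ p : Fin d × Fin d, (X p.1 p.2) ^ 2 := by
      rw [← Finset.univ_product_univ, Finset.sum_product, trace_transpose_mul_eq]
      simp [pow_two]
    have h3 : (Yᵀ * Y).trace = ∑ p : Fin d × Fin d, (Y p.2 p.1) ^ 2 := by
      rw [← Finset.univ_product_univ, Finset.sum_product_right, trace_transpose_mul_eq]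
      simp [pow_two]
    rw [h1, h2, h3]; exact h
  have hX := trace_transpose_mul_self_nonneg X
  have hY := trace_transpose_mul_self_nonneg Y
  rcases le_or_gt ((X * Y).trace) 0 with h | h
  · exact h.trans (by positivity)
  · have h4 : (X * Y).trace ≤ Real.sqrt (((Xᵀ * X).trace) * ((Yᵀ * Y).trace)) := by
      rw [show (X*Y).trace = Real.sqrt (((X*Y).trace)^2) from (Real.sqrt_sq h.le).symm]
      exact Real.sqrt_le_sqrt hsq
    rwa [Real.sqrt_mul hX] at h4

lemma psd_trace_nonneg {X : Matrix (Fin d) (Fin d) ℝ} (hX : X.PosSemidef) : 0 ≤ X.trace := by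
  rw [Matrix.trace]
  apply Finset.sum_nonneg
  intro i _
  exact hX.diag_nonneg

lemma psd_trace_mul_nonneg {X Y : Matrix (Fin d) (Fin d) ℝ}
    (hX : X.PosSemidef) (hY : Y.PosSemidef) : 0 ≤ (X * Y).trace := by
  have hr : hX.sqrt * hX.sqrt = X := hX.sqrt_mul_self
  have hrH : (hX.sqrt)ᴴ = hX.sqrt := hX.posSemidef_sqrt.1
  have h1 : ((hX.sqrt)ᴴ * Y * hX.sqrt).trace = (X * Y).trace := by
    rw [hrH, Matrix.trace_mul_cycle, hr]
  rw [← h1]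
  exact psd_trace_nonneg (hY.conjTranspose_mul_mul_same _)

lemma psd_of_symm_idem {P : Matrix (Fin d) (Fin d) ℝ} (h1 : Pᵀ = P) (h2 : P * P = P) :
    P.PosSemidef := by
  have h3 : P = Pᴴ * P := by
    rw [Matrix.conjTranspose_eq_transpose_of_trivial, h1, h2]
  rw [h3]
  exact Matrix.posSemidef_conjTranspose_mul_self P

lemma vmv_mul_vmv (x y z w : Fin d → ℝ) :
    vecMulVec x y * vecMulVec z w = (y ⬝ᵥ z) • vecMulVec x w := by
  ext i j
  simp only [Matrix.mul_apply, Matrix.vecMulVec_apply, Matrix.smul_apply, dotProduct,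
    smul_eq_mul, Finset.sum_mul]
  refine Finset.sum_congr rfl fun k _ => by ring

lemma trace_vmv (x y : Fin d → ℝ) : (vecMulVec x y).trace = x ⬝ᵥ y := by
  simp [Matrix.trace, Matrix.diag, Matrix.vecMulVec_apply, dotProduct]

lemma transpose_vmv (x y : Fin d → ℝ) : (vecMulVec x y)ᵀ = vecMulVec y x := by
  ext i j
  simp [Matrix.vecMulVec_apply, mul_comm]

set_option maxHeartbeats 2000000 in
/-- Key estimate: `Tr √(a·b²·a) ≤ √(Tr (a·b))` for PSD `a`, `b` with `Tr a² = Tr b² = 1`. -/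
lemma key {a b C : Matrix (Fin d) (Fin d) ℝ} (ha : a.PosSemidef) (hb : b.PosSemidef)
    (ha1 : (a * a).trace = 1) (hb1 : (b * b).trace = 1)
    (hCdef : C = a * (b * b) * a) (hC : C.PosSemidef) :
    hC.sqrt.trace ≤ Real.sqrt ((a * b).trace) := by
  have haT : aᵀ = a := by
    rw [← Matrix.conjTranspose_eq_transpose_of_trivial]; exact ha.1
  have hbT : bᵀ = b := by
    rw [← Matrix.conjTranspose_eq_transpose_of_trivial]; exact hb.1
  have hD : (hC.sqrt).PosSemidef := hC.posSemidef_sqrt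
  have hDD : hC.sqrt * hC.sqrt = C := hC.sqrt_mul_self
  set D := hC.sqrt with hDdef
  set μ : Fin d → ℝ := hD.1.eigenvalues with hμdef
  set v : Fin d → Fin d → ℝ := fun j k => hD.1.eigenvectorBasis j k with hvdef
  have hμ0 : ∀ j, 0 ≤ μ j := fun j => hD.eigenvalues_nonneg j
  have hDv : ∀ j, D *ᵥ v j = μ j • v j := fun j => hD.1.mulVec_eigenvectorBasis j
  have horth : ∀ i j, v i ⬝ᵥ v j = if i = j then 1 else 0 := by
    intro i j
    have h := orthonormal_iff_ite.mp hD.1.eigenvectorBasis.orthonormal i j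
    simpa [PiLp.inner_apply, RCLike.inner_apply, starRingEnd_apply, dotProduct, mul_comm] using h
  have htr : D.trace = ∑ j, μ j := by
    nth_rewrite 1 [hD.1.spectral_theorem]
    rw [Unitary.conjStarAlgAut_apply, Matrix.trace_mul_comm, ← Matrix.mul_assoc,
      Unitary.coe_star_mul_self]
    simp [Matrix.trace_diagonal]
    rfl
  have hMtM : (b * a)ᵀ * (b * a) = C := by
    rw [Matrix.transpose_mul, haT, hbT, hCdef]
    simp only [Matrix.mul_assoc]
  have hMv : ∀ i j, ((b * a) *ᵥ v i) ⬝ᵥ ((b * a) *ᵥ v j) = if i = j then μ j ^ 2 else 0 := by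
    intro i j
    have e1 : ((b * a) *ᵥ v i) ⬝ᵥ ((b * a) *ᵥ v j)
        = ((((b * a)ᵀ * (b * a)) *ᵥ v i) ⬝ᵥ v j) := by
      rw [Matrix.dotProduct_mulVec, ← Matrix.mulVec_transpose, Matrix.mulVec_mulVec]
    rw [e1, hMtM, ← hDD, ← Matrix.mulVec_mulVec, hDv i, Matrix.mulVec_smul, hDv i,
      smul_dotProduct, smul_dotProduct, horth i j]
    by_cases h : i = j
    · subst h; simp [pow_two]
    · simp [h]
  set cc : Fin d → ℝ := fun j => if μ j = 0 then 0 else (μ j)⁻¹ with hccdef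
  set ee : Fin d → ℝ := fun j => if μ j = 0 then 0 else 1 with heedef
  set U : Matrix (Fin d) (Fin d) ℝ := ∑ j, cc j • vecMulVec ((b * a) *ᵥ v j) (v j) with hUdef
  have hUt : Uᵀ = ∑ j, cc j • vecMulVec (v j) ((b * a) *ᵥ v j) := by
    rw [hUdef, Matrix.transpose_sum]
    exact Finset.sum_congr rfl fun j _ => by rw [Matrix.transpose_smul, transpose_vmv]
  -- (I) : trace (Uᵀ * (b*a)) = ∑ μ
  have hI : (Uᵀ * (b * a)).trace = ∑ j, μ j := by
    rw [hUt, Finset.sum_mul, Matrix.trace_sum]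
    refine Finset.sum_congr rfl fun j _ => ?_
    rw [Matrix.smul_mul, Matrix.trace_smul]
    have hvm : vecMulVec (v j) ((b * a) *ᵥ v j) * (b * a)
        = vecMulVec (v j) (((b * a) *ᵥ v j) ᵥ* (b * a)) := by
      ext i k
      simp only [Matrix.mul_apply, Matrix.vecMulVec_apply, Matrix.vecMul, dotProduct,
        Finset.mul_sum]
      refine Finset.sum_congr rfl fun l _ => ?_
      refine Finset.sum_congr rfl fun x _ => by ring
    rw [hvm, trace_vmv]
    have e2 : v j ⬝ᵥ (((b * a) *ᵥ v j) ᵥ* (b * a)) = ((b * a) *ᵥ v j) ⬝ᵥ ((b * a) *ᵥ v j) := by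
      rw [dotProduct_comm, ← Matrix.dotProduct_mulVec]
    rw [e2, hMv j j, if_pos rfl]
    simp only [hccdef, smul_eq_mul]
    by_cases h : μ j = 0
    · simp [h]
    · rw [if_neg h, pow_two, ← mul_assoc, inv_mul_cancel₀ h, one_mul]
  -- (II) : P := Uᵀ * U is the projection ∑ ee j • v j v jᵀ
  have hP : Uᵀ * U = ∑ j, ee j • vecMulVec (v j) (v j) := by
    rw [hUt, hUdef, Finset.sum_mul]
    calc ∑ i, (cc i • vecMulVec (v i) ((b * a) *ᵥ v i)) *
          ∑ j, cc j • vecMulVec ((b * a) *ᵥ v j) (v j)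
        = ∑ i, ∑ j, (cc i * cc j) •
            ((((b * a) *ᵥ v i) ⬝ᵥ ((b * a) *ᵥ v j)) • vecMulVec (v i) (v j)) := by
          refine Finset.sum_congr rfl fun i _ => ?_
          rw [Finset.mul_sum]
          refine Finset.sum_congr rfl fun j _ => ?_
          rw [Matrix.smul_mul, Matrix.mul_smul, vmv_mul_vmv, smul_smul, smul_smul, mul_assoc]
      _ = ∑ i, (cc i * cc i) • ((μ i ^ 2) • vecMulVec (v i) (v i)) := by
          refine Finset.sum_congr rfl fun i _ => ?_
          rw [Finset.sum_eq_single i]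
          · rw [hMv i i, if_pos rfl]
          · intro j _ hji
            rw [hMv i j, if_neg (fun h => hji h.symm)]
            simp
          · intro h; exact absurd (Finset.mem_univ i) h
      _ = ∑ j, ee j • vecMulVec (v j) (v j) := by
          refine Finset.sum_congr rfl fun j _ => ?_
          simp only [hccdef, heedef]
          by_cases h : μ j = 0
          · simp [h]
          · rw [if_neg h, if_neg h, smul_smul]
            congr 1
            rw [pow_two]
            field_simp
  have hPt : (Uᵀ * U)ᵀ = Uᵀ * U := by
    rw [Matrix.transpose_mul, Matrix.transpose_transpose]
  have hPP : (Uᵀ * U) * (Uᵀ * U) = Uᵀ * U := by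
    rw [hP]
    calc (∑ i, ee i • vecMulVec (v i) (v i)) * ∑ j, ee j • vecMulVec (v j) (v j)
        = ∑ i, ∑ j, (ee i * ee j) • ((v i ⬝ᵥ v j) • vecMulVec (v i) (v j)) := by
          rw [Finset.sum_mul]
          refine Finset.sum_congr rfl fun i _ => ?_
          rw [Finset.mul_sum]
          refine Finset.sum_congr rfl fun j _ => ?_
          rw [Matrix.smul_mul, Matrix.mul_smul, vmv_mul_vmv, smul_smul, smul_smul, mul_assoc]
      _ = ∑ i, (ee i * ee i) • ((1:ℝ) • vecMulVec (v i) (v i)) := by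
          refine Finset.sum_congr rfl fun i _ => ?_
          rw [Finset.sum_eq_single i]
          · rw [horth i i, if_pos rfl]
          · intro j _ hji
            rw [horth i j, if_neg (fun h => hji h.symm)]
            simp
          · intro h; exact absurd (Finset.mem_univ i) h
      _ = ∑ j, ee j • vecMulVec (v j) (v j) := by
          refine Finset.sum_congr rfl fun j _ => ?_
          rw [one_smul]
          congr 1
          simp only [heedef]
          by_cases h : μ j = 0 <;> simp [h]
  have hPpsd : (Uᵀ * U).PosSemidef := by
    rw [← Matrix.conjTranspose_eq_transpose_of_trivial]
    exact Matrix.posSemidef_conjTranspose_mul_self U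
  have h1P : ((1 : Matrix (Fin d) (Fin d) ℝ) - Uᵀ * U).PosSemidef := by
    apply psd_of_symm_idem
    · rw [Matrix.transpose_sub, Matrix.transpose_one, hPt]
    · rw [Matrix.sub_mul, Matrix.one_mul, Matrix.mul_sub, Matrix.mul_one, hPP]
      simp
  clear hDdef hμdef hvdef hccdef heedef hUdef hUt hP
  clear_value D μ v cc ee U
  -- fourth roots
  have hr : ha.sqrt * ha.sqrt = a := ha.sqrt_mul_self
  have hs : hb.sqrt * hb.sqrt = b := hb.sqrt_mul_self
  have hrT : (ha.sqrt)ᵀ = ha.sqrt := by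
    rw [← Matrix.conjTranspose_eq_transpose_of_trivial]; exact ha.posSemidef_sqrt.1
  have hsT : (hb.sqrt)ᵀ = hb.sqrt := by
    rw [← Matrix.conjTranspose_eq_transpose_of_trivial]; exact hb.posSemidef_sqrt.1
  set r := ha.sqrt with hrdef
  set s := hb.sqrt with hsdef
  -- trace identities
  have e1 : D.trace = ((r * (Uᵀ * s)) * (s * r)).trace := by
    rw [htr, ← hI]
    have h5 : (r * (Uᵀ * s)) * (s * r) = r * (Uᵀ * (s * (s * r))) := by
      simp only [Matrix.mul_assoc]
    rw [h5]
    conv_rhs => rw [Matrix.trace_mul_comm r (Uᵀ * (s * (s * r)))]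
    congr 1
    rw [← hr, ← hs]
    simp only [Matrix.mul_assoc]
  have hYt : ((s * r)ᵀ * (s * r)).trace = (a * b).trace := by
    rw [Matrix.transpose_mul, hrT, hsT]
    have h6 : (r * s) * (s * r) = r * ((s * s) * r) := by simp only [Matrix.mul_assoc]
    rw [h6, hs, Matrix.trace_mul_comm r (b * r), Matrix.mul_assoc, hr,
      Matrix.trace_mul_comm b a]
  have hXeq : ((r * (Uᵀ * s))ᵀ * (r * (Uᵀ * s))).trace = ((U * (a * Uᵀ)) * b).trace := by
    rw [Matrix.transpose_mul, Matrix.transpose_mul, Matrix.transpose_transpose, hrT, hsT]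
    have h7 : ((s * U) * r) * (r * (Uᵀ * s)) = s * (U * ((r * r) * (Uᵀ * s))) := by
      simp only [Matrix.mul_assoc]
    rw [h7, hr, Matrix.trace_mul_comm s (U * (a * (Uᵀ * s))), ← hs]
    congr 1
    simp only [Matrix.mul_assoc]
  have hW : ((U * (a * Uᵀ))ᵀ * (U * (a * Uᵀ))).trace
      = (a * ((Uᵀ * U) * (a * (Uᵀ * U)))).trace := by
    rw [Matrix.transpose_mul, Matrix.transpose_mul, Matrix.transpose_transpose, haT]
    rw [show ((U * a) * Uᵀ) * (U * (a * Uᵀ)) = U * (a * (Uᵀ * (U * (a * Uᵀ)))) from by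
      simp only [Matrix.mul_assoc]]
    rw [Matrix.trace_mul_comm U (a * (Uᵀ * (U * (a * Uᵀ))))]
    congr 1
    simp only [Matrix.mul_assoc]
  -- PSD facts
  have haa_psd : (a * a).PosSemidef := by
    have h := Matrix.posSemidef_conjTranspose_mul_self a
    rwa [Matrix.conjTranspose_eq_transpose_of_trivial, haT] at h
  have haPa_psd : (a * ((Uᵀ * U) * a)).PosSemidef := by
    have h := hPpsd.conjTranspose_mul_mul_same a
    rwa [Matrix.conjTranspose_eq_transpose_of_trivial, haT, Matrix.mul_assoc] at h
  -- step 1 : Tr(PaPa) ≤ Tr(P a²)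
  have step1 : (a * ((Uᵀ * U) * (a * (Uᵀ * U)))).trace ≤ ((Uᵀ * U) * (a * a)).trace := by
    have h11 := psd_trace_mul_nonneg haPa_psd h1P
    rw [Matrix.mul_sub, Matrix.mul_one, Matrix.trace_sub] at h11
    have h12 : ((a * ((Uᵀ * U) * a)) * (Uᵀ * U)).trace
        = (a * ((Uᵀ * U) * (a * (Uᵀ * U)))).trace := by
      congr 1
      simp only [Matrix.mul_assoc]
    have h13 : (a * ((Uᵀ * U) * a)).trace = ((Uᵀ * U) * (a * a)).trace := by
      rw [Matrix.trace_mul_comm a ((Uᵀ * U) * a)]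
      congr 1
      simp only [Matrix.mul_assoc]
    rw [h12, h13] at h11
    linarith
  -- step 2 : Tr(P a²) ≤ 1
  have step2 : ((Uᵀ * U) * (a * a)).trace ≤ 1 := by
    have h14 := psd_trace_mul_nonneg h1P haa_psd
    rw [Matrix.sub_mul, Matrix.one_mul, Matrix.trace_sub, ha1] at h14
    linarith
  -- the middle factor is at most 1
  have hXb : ((U * (a * Uᵀ)) * b).trace ≤ 1 := by
    have h15 := trace_CS (U * (a * Uᵀ)) b
    rw [hW] at h15
    have hb' : (bᵀ * b).trace = 1 := by rw [hbT, hb1]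
    rw [hb', Real.sqrt_one, mul_one] at h15
    exact h15.trans (Real.sqrt_le_one.mpr (step1.trans step2))
  -- final chain
  calc D.trace = ((r * (Uᵀ * s)) * (s * r)).trace := e1
    _ ≤ Real.sqrt (((r * (Uᵀ * s))ᵀ * (r * (Uᵀ * s))).trace)
        * Real.sqrt (((s * r)ᵀ * (s * r)).trace) := trace_CS _ _
    _ = Real.sqrt (((U * (a * Uᵀ)) * b).trace) * Real.sqrt ((a * b).trace) := by
        rw [hXeq, hYt]
    _ ≤ 1 * Real.sqrt ((a * b).trace) := by
        apply mul_le_mul_of_nonneg_right _ (Real.sqrt_nonneg _)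
        exact Real.sqrt_le_one.mpr hXb
    _ = Real.sqrt ((a * b).trace) := one_mul _

end HellingerAux

/-- For density matrices (positive semidefinite with trace 1), the Hellinger distance is
dominated by `√2` times the Bures distance:
`‖A^{1/2} − B^{1/2}‖_F² ≤ 2·(Tr A + Tr B − 2Tr((A^{1/2} B A^{1/2})^{1/2}))`. -/
theorem hellingerSq_le_two_buresSq {d : ℕ} (A B : Matrix (Fin d) (Fin d) ℝ)
    (hA : A.PosSemidef) (hB : B.PosSemidef) (htA : A.trace = 1) (htB : B.trace = 1) :
    frobSq (msqrt A - msqrt B) ≤ 2 * buresSq A B := by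
  have ha := hA.posSemidef_sqrt
  have hb := hB.posSemidef_sqrt
  have hma : msqrt A = hA.sqrt := dif_pos hA
  have hmb : msqrt B = hB.sqrt := dif_pos hB
  have haa : hA.sqrt * hA.sqrt = A := hA.sqrt_mul_self
  have hbb : hB.sqrt * hB.sqrt = B := hB.sqrt_mul_self
  have haT : (hA.sqrt)ᵀ = hA.sqrt := by
    rw [← Matrix.conjTranspose_eq_transpose_of_trivial]; exact ha.1
  have hbT : (hB.sqrt)ᵀ = hB.sqrt := by
    rw [← Matrix.conjTranspose_eq_transpose_of_trivial]; exact hb.1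
  have hC : (hA.sqrt * B * hA.sqrt).PosSemidef := by
    have h := hB.mul_mul_conjTranspose_same hA.sqrt
    rwa [ha.1] at h
  have hkey := HellingerAux.key ha hb
    (by rw [haa, htA]) (by rw [hbb, htB])
    (show hA.sqrt * B * hA.sqrt = hA.sqrt * (hB.sqrt * hB.sqrt) * hA.sqrt by rw [hbb]) hC
  unfold frobSq buresSq
  rw [hma, hmb, htA, htB]
  rw [show msqrt (hA.sqrt * B * hA.sqrt) = hC.sqrt from dif_pos hC]
  have hexp : ((hA.sqrt - hB.sqrt)ᵀ * (hA.sqrt - hB.sqrt)).trace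
      = 2 - 2 * (hA.sqrt * hB.sqrt).trace := by
    rw [Matrix.transpose_sub, haT, hbT, Matrix.sub_mul, Matrix.mul_sub, Matrix.mul_sub,
      Matrix.trace_sub, Matrix.trace_sub, Matrix.trace_sub, haa, hbb, htA, htB,
      Matrix.trace_mul_comm hB.sqrt hA.sqrt]
    ring
  rw [hexp]
  have ht0 : 0 ≤ (hA.sqrt * hB.sqrt).trace := HellingerAux.psd_trace_mul_nonneg ha hb
  have h1 := Real.sq_sqrt ht0
  have h2 := Real.sqrt_nonneg ((hA.sqrt * hB.sqrt).trace)
  nlinarith [sq_nonneg (Real.sqrt ((hA.sqrt * hB.sqrt).trace) - 1), hkey]
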